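/- Let p ∈ (1,∞) with conjugate p', let δ ≥ 0, and let F(A) = (δ + |A^sym|)^((p-2)/2) A^sym and S(A) = (δ + |A^sym|)^(p-2) A^sym on d×d matrices. If p ≤ 2, then there exists a constant c depending only on p such that for all matrices A, B: |S(A) - S(B)|^{p'} ≤ c·|F(A) - F(B)|². -/
import Mathlib


open Matrix in
/-- Symmetric part of a square matrix. -/
noncomputable def msym {d : ℕ} (A : Matrix (Fin d) (Fin d) ℝ) : Matrix (Fin d) (Fin d) ℝ :=
  (1/2 : ℝ) • (A + Aᵀ)

/-- Frobenius norm of a matrix. -/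
noncomputable def frob {d : ℕ} (A : Matrix (Fin d) (Fin d) ℝ) : ℝ :=
  Real.sqrt (∑ i, ∑ j, (A i j) ^ 2)

/-- Frobenius inner product of two matrices. -/
noncomputable def frobInner {d : ℕ} (A B : Matrix (Fin d) (Fin d) ℝ) : ℝ :=
  ∑ i, ∑ j, A i j * B i j

/-- The extra-stress tensor `S(A) = (δ + |A^sym|)^(p-2) A^sym` (with `ν₀ = 1`). -/
noncomputable def Smap (δ p : ℝ) {d : ℕ} (A : Matrix (Fin d) (Fin d) ℝ) :
    Matrix (Fin d) (Fin d) ℝ :=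
  ((δ + frob (msym A)) ^ (p - 2)) • msym A

/-- The nonlinear quantity `F(A) = (δ + |A^sym|)^((p-2)/2) A^sym`. -/
noncomputable def Fmap (δ p : ℝ) {d : ℕ} (A : Matrix (Fin d) (Fin d) ℝ) :
    Matrix (Fin d) (Fin d) ℝ :=
  ((δ + frob (msym A)) ^ ((p - 2) / 2)) • msym A


open Real

lemma mono_aux {δ q s t : ℝ} (hδ : 0 ≤ δ) (hq1 : -1 ≤ q) (hq0 : q ≤ 0)
    (ht : 0 ≤ t) (hts : t ≤ s) : (δ + t) ^ q * t ≤ (δ + s) ^ q * s := by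
  rcases eq_or_lt_of_le (by linarith : (0:ℝ) ≤ δ + t) with h0 | hu
  · have ht0 : t = 0 := by nlinarith
    rw [ht0, mul_zero]
    exact mul_nonneg (Real.rpow_nonneg (by linarith) _) (by linarith)
  · set u := δ + t with hu_def
    set v := δ + s with hv_def
    have hv : 0 < v := by simp only [hv_def]; linarith
    have huv : u ≤ v := by simp only [hu_def, hv_def]; linarith
    have he0 : 0 ≤ -q := by linarith
    have he1 : -q ≤ 1 := by linarith
    have hueq : u ^ q = (u ^ (-q))⁻¹ := by
      rw [← Real.rpow_neg hu.le, neg_neg]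
    have hveq : v ^ q = (v ^ (-q))⁻¹ := by
      rw [← Real.rpow_neg hv.le, neg_neg]
    rw [hueq, hveq, inv_mul_eq_div, inv_mul_eq_div,
      div_le_div_iff₀ (Real.rpow_pos_of_pos hu _) (Real.rpow_pos_of_pos hv _)]
    -- goal: t * v^(-q) ≤ s * u^(-q)
    have hR : 1 ≤ v / u := (one_le_div hu).2 huv
    have hveq2 : v ^ (-q) = u ^ (-q) * (v / u) ^ (-q) := by
      rw [← Real.mul_rpow hu.le (by positivity)]
      congr 1
      field_simp
    have hRe : (v / u) ^ (-q) ≤ v / u := by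
      calc (v / u) ^ (-q) ≤ (v / u) ^ (1:ℝ) :=
            Real.rpow_le_rpow_of_exponent_le hR he1
        _ = v / u := Real.rpow_one _
    have htR : t * (v / u) ≤ s := by
      rw [mul_div_assoc', div_le_iff₀ hu]
      have : t * v ≤ s * u := by rw [hu_def, hv_def]; nlinarith
      linarith
    calc t * v ^ (-q) = (t * (v/u)^(-q)) * u ^ (-q) := by rw [hveq2]; ring
      _ ≤ (t * (v/u)) * u ^ (-q) := by
          have h1 : t * (v/u)^(-q) ≤ t * (v/u) := mul_le_mul_of_nonneg_left hRe ht
          exact mul_le_mul_of_nonneg_right h1 (Real.rpow_nonneg hu.le _)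
      _ ≤ s * u ^ (-q) := mul_le_mul_of_nonneg_right htR (Real.rpow_nonneg hu.le _)

open Real

section scalar
variable {δ q e s t : ℝ}

lemma two_rpow_bound (hδ : 0 ≤ δ) (hq1 : -1 ≤ q) (hq0 : q ≤ 0)
    (ht : 0 ≤ t) (hts : t ≤ s) (hsig : 0 < δ + s + t) :
    (δ + s) ^ q ≤ 2 * (δ + s + t) ^ q := by
  have hspos : 0 < δ + s := by nlinarith
  have h1 : δ + s + t ≤ 2 * (δ + s) := by linarith
  have h2 : (2 * (δ + s)) ^ q ≤ (δ + s + t) ^ q :=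
    Real.rpow_le_rpow_of_nonpos hsig h1 hq0
  have h3 : (2 * (δ + s)) ^ q = 2 ^ q * (δ + s) ^ q :=
    Real.mul_rpow (by norm_num) hspos.le
  have h4 : (1:ℝ) ≤ 2 ^ (-q) := by
    calc (1:ℝ) = 2 ^ (0:ℝ) := by rw [Real.rpow_zero]
      _ ≤ 2 ^ (-q) := Real.rpow_le_rpow_of_exponent_le one_le_two (by linarith)
  have h5 : (2:ℝ) ^ (-q) ≤ 2 := by
    calc (2:ℝ) ^ (-q) ≤ 2 ^ (1:ℝ) := Real.rpow_le_rpow_of_exponent_le one_le_two (by linarith)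
      _ = 2 := Real.rpow_one 2
  have h6 : (δ + s) ^ q = 2 ^ (-q) * (2 ^ q * (δ + s) ^ q) := by
    rw [← mul_assoc, ← Real.rpow_add (by norm_num : (0:ℝ) < 2)]
    simp
  rw [h3] at h2
  rw [h6]
  calc 2 ^ (-q) * (2 ^ q * (δ + s) ^ q) ≤ 2 ^ (-q) * (δ + s + t) ^ q := by
        exact mul_le_mul_of_nonneg_left h2 (by positivity)
    _ ≤ 2 * (δ + s + t) ^ q := by
        exact mul_le_mul_of_nonneg_right h5 (Real.rpow_nonneg hsig.le q)

lemma k_diff_upper (hδ : 0 ≤ δ) (hq1 : -1 ≤ q) (hq0 : q ≤ 0)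
    (ht : 0 ≤ t) (hts : t ≤ s) (hsig : 0 < δ + s + t) :
    (δ + s) ^ q * s - (δ + t) ^ q * t ≤ 2 * (δ + s + t) ^ q * (s - t) := by
  have step1 : (δ + s) ^ q * s - (δ + t) ^ q * t ≤ (δ + s) ^ q * (s - t) := by
    rcases eq_or_lt_of_le (by linarith : (0:ℝ) ≤ δ + t) with h0 | hu
    · have ht0 : t = 0 := by nlinarith
      simp [ht0]
    · have : (δ + s) ^ q ≤ (δ + t) ^ q :=
        Real.rpow_le_rpow_of_nonpos hu (by linarith) hq0
      nlinarith [mul_le_mul_of_nonneg_right this ht]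
  have step2 := two_rpow_bound hδ hq1 hq0 ht hts hsig
  calc (δ + s) ^ q * s - (δ + t) ^ q * t ≤ (δ + s) ^ q * (s - t) := step1
    _ ≤ (2 * (δ + s + t) ^ q) * (s - t) :=
        mul_le_mul_of_nonneg_right step2 (by linarith)
    _ = 2 * (δ + s + t) ^ q * (s - t) := by ring

lemma k_sum_upper (hδ : 0 ≤ δ) (hq1 : -1 ≤ q) (hq0 : q ≤ 0)
    (hs : 0 ≤ s) (ht : 0 ≤ t) :
    (δ + s) ^ q * s + (δ + t) ^ q * t ≤ 2 * (δ + s + t) ^ q * (s + t) := by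
  have h1 : (δ + s) ^ q * s ≤ (δ + (s + t)) ^ q * (s + t) :=
    mono_aux hδ hq1 hq0 hs (by linarith)
  have h2 : (δ + t) ^ q * t ≤ (δ + (s + t)) ^ q * (s + t) :=
    mono_aux hδ hq1 hq0 ht (by linarith)
  have h3 : δ + (s + t) = δ + s + t := by ring
  rw [h3] at h1 h2
  linarith

lemma m_sum_lower (hδ : 0 ≤ δ) (he0 : e ≤ 0) (hs : 0 ≤ s) (ht : 0 ≤ t) :
    (δ + s + t) ^ e * (s + t) ≤ (δ + s) ^ e * s + (δ + t) ^ e * t := by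
  have h1 : (δ + s + t) ^ e * s ≤ (δ + s) ^ e * s := by
    rcases eq_or_lt_of_le (by linarith : (0:ℝ) ≤ δ + s) with h0 | hv
    · have : s = 0 := by nlinarith
      simp [this]
    · exact mul_le_mul_of_nonneg_right
        (Real.rpow_le_rpow_of_nonpos hv (by linarith) he0) hs
  have h2 : (δ + s + t) ^ e * t ≤ (δ + t) ^ e * t := by
    rcases eq_or_lt_of_le (by linarith : (0:ℝ) ≤ δ + t) with h0 | hv
    · have : t = 0 := by nlinarith
      simp [this]
    · exact mul_le_mul_of_nonneg_right
        (Real.rpow_le_rpow_of_nonpos hv (by linarith) he0) ht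
  nlinarith

lemma m_diff_lower (hδ : 0 ≤ δ) (he1 : -1 ≤ e) (he0 : e ≤ 0)
    (ht : 0 ≤ t) (hts : t ≤ s) (hsig : 0 < δ + s + t) :
    (1 + e) * (δ + s + t) ^ e * (s - t) ≤ (δ + s) ^ e * s - (δ + t) ^ e * t := by
  have hvpos : 0 < δ + s := by nlinarith
  have main : ((δ + t) ^ e - (δ + s) ^ e) * t ≤ (-e) * ((δ + s) ^ e) * (s - t) := by
    rcases eq_or_lt_of_le (by linarith : (0:ℝ) ≤ δ + t) with h0 | hu
    · have ht0 : t = 0 := by nlinarith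
      rw [ht0, mul_zero]
      exact mul_nonneg (mul_nonneg (by linarith) (Real.rpow_nonneg hvpos.le e)) (by linarith)
    · set u := δ + t with hu_def
      set v := δ + s with hv_def
      have huv : u ≤ v := by simp only [hu_def, hv_def]; linarith
      have hvpos' : 0 < v := hvpos
      set r := u / v with hr_def
      have hr0 : 0 < r := div_pos hu hvpos'
      have hr1 : r ≤ 1 := (div_le_one hvpos').2 huv
      have key : r ^ (1 + e) ≤ (1 + e) * r + (-e) := by
        have := Real.geom_mean_le_arith_mean2_weighted
          (by linarith : (0:ℝ) ≤ 1 + e) (by linarith : (0:ℝ) ≤ -e)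
          hr0.le (by norm_num : (0:ℝ) ≤ 1) (by ring)
        simpa using this
      have hue : u ^ e = v ^ e * r ^ e := by
        have huvr : u = v * r := by
          rw [hr_def]; field_simp
        rw [huvr, Real.mul_rpow hvpos'.le hr0.le]
      have hre1 : r ^ e * r = r ^ (1 + e) := by
        rw [show (1 + e) = e + 1 by ring, Real.rpow_add hr0, Real.rpow_one]
      have hstep : (u ^ e - v ^ e) * t ≤ (u ^ e - v ^ e) * u := by
        have hd : 0 ≤ u ^ e - v ^ e :=
          sub_nonneg.2 (Real.rpow_le_rpow_of_nonpos hu huv he0)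
        have : t ≤ u := by simp only [hu_def]; linarith
        nlinarith
      have hmain2 : (u ^ e - v ^ e) * u ≤ (-e) * v ^ e * (v - u) := by
        have hueq : u = v * r := by rw [hr_def]; field_simp
        have expand : (u ^ e - v ^ e) * u = v ^ e * v * (r ^ (1 + e) - r) := by
          rw [← hre1, hue, hueq]
          ring
        have expand2 : (-e) * v ^ e * (v - u) = v ^ e * v * ((-e) * (1 - r)) := by
          rw [hueq]; ring
        rw [expand, expand2]
        have hfac : 0 ≤ v ^ e * v := by positivity
        have : r ^ (1 + e) - r ≤ (-e) * (1 - r) := by nlinarith [key]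
        nlinarith
      have hvu : v - u = s - t := by simp only [hu_def, hv_def]; ring
      calc (u ^ e - v ^ e) * t ≤ (u ^ e - v ^ e) * u := hstep
        _ ≤ (-e) * v ^ e * (v - u) := hmain2
        _ = (-e) * v ^ e * (s - t) := by rw [hvu]
  have hanti : (δ + s + t) ^ e ≤ (δ + s) ^ e :=
    Real.rpow_le_rpow_of_nonpos hvpos (by linarith) he0
  have expand : (δ + s) ^ e * s - (δ + t) ^ e * t
      = (δ + s) ^ e * (s - t) - ((δ + t) ^ e - (δ + s) ^ e) * t := by ring
  rw [expand]
  have h1 : (1 + e) * (δ + s + t) ^ e * (s - t) ≤ (1 + e) * (δ + s) ^ e * (s - t) := by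
    have : 0 ≤ (1 + e) * (s - t) := mul_nonneg (by linarith) (by linarith)
    nlinarith [hanti]
  nlinarith [main]

end scalar
section quad

lemma affine_upper {G gs gt s t x : ℝ}
    (e1 : (gs * s - gt * t) ^ 2 ≤ 4 * G ^ 2 * (s - t) ^ 2)
    (e2 : (gs * s + gt * t) ^ 2 ≤ 4 * G ^ 2 * (s + t) ^ 2)
    (hx1 : x ≤ s * t) (hx2 : -(s * t) ≤ x) :
    (gs * s) ^ 2 + (gt * t) ^ 2 - 2 * (gs * gt) * x
      ≤ 4 * G ^ 2 * (s ^ 2 + t ^ 2 - 2 * x) := by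
  rcases le_total (2 * (gs * gt)) (8 * G ^ 2) with hc | hc
  · nlinarith [mul_nonneg (by linarith : (0:ℝ) ≤ 8 * G ^ 2 - 2 * (gs * gt))
      (by linarith : (0:ℝ) ≤ s * t - x)]
  · nlinarith [mul_nonneg (by linarith : (0:ℝ) ≤ 2 * (gs * gt) - 8 * G ^ 2)
      (by linarith : (0:ℝ) ≤ x + s * t)]

lemma affine_lower {c hs ht s t x : ℝ}
    (e1 : c * (s - t) ^ 2 ≤ (hs * s - ht * t) ^ 2)
    (e2 : c * (s + t) ^ 2 ≤ (hs * s + ht * t) ^ 2)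
    (hx1 : x ≤ s * t) (hx2 : -(s * t) ≤ x) :
    c * (s ^ 2 + t ^ 2 - 2 * x)
      ≤ (hs * s) ^ 2 + (ht * t) ^ 2 - 2 * (hs * ht) * x := by
  rcases le_total (2 * (hs * ht)) (2 * c) with hc | hc
  · nlinarith [mul_nonneg (by linarith : (0:ℝ) ≤ 2 * c - 2 * (hs * ht))
      (by linarith : (0:ℝ) ≤ x + s * t)]
  · nlinarith [mul_nonneg (by linarith : (0:ℝ) ≤ 2 * (hs * ht) - 2 * c)
      (by linarith : (0:ℝ) ≤ s * t - x)]

variable {p δ s t x : ℝ}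

lemma S_quad (hp1 : 1 < p) (hp2 : p ≤ 2) (hδ : 0 ≤ δ) (hs : 0 ≤ s) (ht : 0 ≤ t)
    (hsig : 0 < δ + s + t) (hx1 : x ≤ s * t) (hx2 : -(s * t) ≤ x) :
    ((δ + s) ^ (p-2) * s) ^ 2 + ((δ + t) ^ (p-2) * t) ^ 2
        - 2 * ((δ + s) ^ (p-2) * (δ + t) ^ (p-2)) * x
      ≤ 4 * ((δ + s + t) ^ (p-2)) ^ 2 * (s ^ 2 + t ^ 2 - 2 * x) := by
  have hq1 : (-1:ℝ) ≤ p - 2 := by linarith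
  have hq0 : p - 2 ≤ (0:ℝ) := by linarith
  have hG : (0:ℝ) ≤ (δ + s + t) ^ (p-2) := Real.rpow_nonneg hsig.le _
  have e1 : ((δ + s) ^ (p-2) * s - (δ + t) ^ (p-2) * t) ^ 2
      ≤ 4 * ((δ + s + t) ^ (p-2)) ^ 2 * (s - t) ^ 2 := by
    rcases le_total t s with h | h
    · have h1 := mono_aux hδ hq1 hq0 ht h
      have h2 := k_diff_upper hδ hq1 hq0 ht h hsig
      nlinarith [mul_nonneg hG (by linarith : (0:ℝ) ≤ s - t)]
    · have h1 := mono_aux hδ hq1 hq0 hs h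
      have h2 := k_diff_upper hδ hq1 hq0 hs h (by linarith : 0 < δ + t + s)
      have h3 : δ + t + s = δ + s + t := by ring
      rw [h3] at h2
      nlinarith [mul_nonneg hG (by linarith : (0:ℝ) ≤ t - s)]
  have e2 : ((δ + s) ^ (p-2) * s + (δ + t) ^ (p-2) * t) ^ 2
      ≤ 4 * ((δ + s + t) ^ (p-2)) ^ 2 * (s + t) ^ 2 := by
    have h2 := k_sum_upper hδ hq1 hq0 hs ht
    have hnn : 0 ≤ (δ + s) ^ (p-2) * s + (δ + t) ^ (p-2) * t :=
      add_nonneg (mul_nonneg (Real.rpow_nonneg (by linarith) _) hs)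
        (mul_nonneg (Real.rpow_nonneg (by linarith) _) ht)
    nlinarith [mul_nonneg hG (by linarith : (0:ℝ) ≤ s + t)]
  exact affine_upper e1 e2 hx1 hx2

lemma F_quad (hp1 : 1 < p) (hp2 : p ≤ 2) (hδ : 0 ≤ δ) (hs : 0 ≤ s) (ht : 0 ≤ t)
    (hsig : 0 < δ + s + t) (hx1 : x ≤ s * t) (hx2 : -(s * t) ≤ x) :
    p ^ 2 / 4 * ((δ + s + t) ^ (p-2)) * (s ^ 2 + t ^ 2 - 2 * x)
      ≤ ((δ + s) ^ ((p-2)/2) * s) ^ 2 + ((δ + t) ^ ((p-2)/2) * t) ^ 2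
        - 2 * ((δ + s) ^ ((p-2)/2) * (δ + t) ^ ((p-2)/2)) * x := by
  have he1 : (-1:ℝ) ≤ (p-2)/2 := by linarith
  have he0 : (p-2)/2 ≤ (0:ℝ) := by linarith
  have hone : 1 + (p-2)/2 = p/2 := by ring
  have hGsq : ((δ + s + t) ^ ((p-2)/2)) ^ 2 = (δ + s + t) ^ (p-2) := by
    rw [sq, ← Real.rpow_add hsig]
    ring_nf
  have hG2 : (0:ℝ) ≤ (δ + s + t) ^ ((p-2)/2) := Real.rpow_nonneg hsig.le _
  have hp4 : p ^ 2 / 4 = (p/2) ^ 2 := by ring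
  have e1 : p ^ 2 / 4 * ((δ + s + t) ^ (p-2)) * (s - t) ^ 2
      ≤ ((δ + s) ^ ((p-2)/2) * s - (δ + t) ^ ((p-2)/2) * t) ^ 2 := by
    rcases le_total t s with h | h
    · have h1 := m_diff_lower hδ he1 he0 ht h hsig
      rw [hone] at h1
      have hnn : 0 ≤ p/2 * (δ + s + t) ^ ((p-2)/2) * (s - t) :=
        mul_nonneg (mul_nonneg (by linarith) hG2) (by linarith)
      calc p ^ 2 / 4 * ((δ + s + t) ^ (p-2)) * (s - t) ^ 2
          = (p/2 * (δ + s + t) ^ ((p-2)/2) * (s - t)) ^ 2 := by rw [← hGsq]; ring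
        _ ≤ ((δ + s) ^ ((p-2)/2) * s - (δ + t) ^ ((p-2)/2) * t) ^ 2 :=
            pow_le_pow_left₀ hnn h1 2
    · have h1 := m_diff_lower hδ he1 he0 hs h (by linarith : 0 < δ + t + s)
      rw [hone] at h1
      have h3 : δ + t + s = δ + s + t := by ring
      rw [h3] at h1
      have hnn : 0 ≤ p/2 * (δ + s + t) ^ ((p-2)/2) * (t - s) :=
        mul_nonneg (mul_nonneg (by linarith) hG2) (by linarith)
      calc p ^ 2 / 4 * ((δ + s + t) ^ (p-2)) * (s - t) ^ 2
          = (p/2 * (δ + s + t) ^ ((p-2)/2) * (t - s)) ^ 2 := by rw [← hGsq]; ring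
        _ ≤ ((δ + t) ^ ((p-2)/2) * t - (δ + s) ^ ((p-2)/2) * s) ^ 2 :=
            pow_le_pow_left₀ hnn h1 2
        _ = ((δ + s) ^ ((p-2)/2) * s - (δ + t) ^ ((p-2)/2) * t) ^ 2 := by ring
  have e2 : p ^ 2 / 4 * ((δ + s + t) ^ (p-2)) * (s + t) ^ 2
      ≤ ((δ + s) ^ ((p-2)/2) * s + (δ + t) ^ ((p-2)/2) * t) ^ 2 := by
    have h1 := m_sum_lower hδ he0 hs ht
    have hnn : 0 ≤ (δ + s + t) ^ ((p-2)/2) * (s + t) :=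
      mul_nonneg hG2 (by linarith)
    have hsq : ((δ + s + t) ^ ((p-2)/2) * (s + t)) ^ 2
        ≤ ((δ + s) ^ ((p-2)/2) * s + (δ + t) ^ ((p-2)/2) * t) ^ 2 :=
      pow_le_pow_left₀ hnn h1 2
    have hp41 : p ^ 2 / 4 ≤ 1 := by nlinarith
    calc p ^ 2 / 4 * ((δ + s + t) ^ (p-2)) * (s + t) ^ 2
        = p ^ 2 / 4 * ((δ + s + t) ^ ((p-2)/2) * (s + t)) ^ 2 := by rw [← hGsq]; ring
      _ ≤ 1 * ((δ + s + t) ^ ((p-2)/2) * (s + t)) ^ 2 :=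
          mul_le_mul_of_nonneg_right hp41 (sq_nonneg _)
      _ = ((δ + s + t) ^ ((p-2)/2) * (s + t)) ^ 2 := by ring
      _ ≤ ((δ + s) ^ ((p-2)/2) * s + (δ + t) ^ ((p-2)/2) * t) ^ 2 := hsq
  exact affine_lower e1 e2 hx1 hx2

end quad
section matrixpart

variable {d : ℕ}

lemma frob_nonneg (M : Matrix (Fin d) (Fin d) ℝ) : 0 ≤ frob M :=
  Real.sqrt_nonneg _

lemma frob_sq (M : Matrix (Fin d) (Fin d) ℝ) :
    frob M ^ 2 = ∑ i, ∑ j, (M i j) ^ 2 :=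
  Real.sq_sqrt (by positivity)

lemma frob_eq_zero {M : Matrix (Fin d) (Fin d) ℝ} (h : frob M = 0) : M = 0 := by
  have hsum : ∑ i, ∑ j, (M i j) ^ 2 = 0 := by
    have := frob_sq M
    rw [h] at this
    simpa using this.symm
  funext i j
  have h1 : ∀ i ∈ Finset.univ, (0:ℝ) ≤ ∑ j, (M i j) ^ 2 := fun i _ => by positivity
  have h2 := (Finset.sum_eq_zero_iff_of_nonneg h1).1 hsum i (Finset.mem_univ i)
  have h3 : ∀ j ∈ Finset.univ, (0:ℝ) ≤ (M i j) ^ 2 := fun j _ => sq_nonneg _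
  have h4 := (Finset.sum_eq_zero_iff_of_nonneg h3).1 h2 j (Finset.mem_univ j)
  have := pow_eq_zero_iff (n := 2) (by norm_num) |>.1 h4
  simpa using this

lemma frobInner_abs_le (a b : Matrix (Fin d) (Fin d) ℝ) :
    |frobInner a b| ≤ frob a * frob b := by
  have hprod : frobInner a b
      = ∑ x ∈ (Finset.univ ×ˢ Finset.univ : Finset (Fin d × Fin d)),
          a x.1 x.2 * b x.1 x.2 := by
    rw [frobInner, Finset.sum_product]
  have ha : frob a ^ 2
      = ∑ x ∈ (Finset.univ ×ˢ Finset.univ : Finset (Fin d × Fin d)), (a x.1 x.2) ^ 2 := by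
    rw [frob_sq, Finset.sum_product]
  have hb : frob b ^ 2
      = ∑ x ∈ (Finset.univ ×ˢ Finset.univ : Finset (Fin d × Fin d)), (b x.1 x.2) ^ 2 := by
    rw [frob_sq, Finset.sum_product]
  have hcs := Finset.sum_mul_sq_le_sq_mul_sq
    (Finset.univ ×ˢ Finset.univ : Finset (Fin d × Fin d))
    (fun x => a x.1 x.2) (fun x => b x.1 x.2)
  have h2 : (frobInner a b) ^ 2 ≤ (frob a * frob b) ^ 2 := by
    rw [hprod, mul_pow, ha, hb]
    exact hcs
  have := Real.sqrt_le_sqrt h2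
  rwa [Real.sqrt_sq_eq_abs, Real.sqrt_sq (mul_nonneg (frob_nonneg a) (frob_nonneg b))] at this

lemma frob_expand (x y : ℝ) (a b : Matrix (Fin d) (Fin d) ℝ) :
    frob (x • a - y • b) ^ 2
      = x ^ 2 * frob a ^ 2 + y ^ 2 * frob b ^ 2 - 2 * (x * y) * frobInner a b := by
  rw [frob_sq, frob_sq, frob_sq, frobInner]
  have hpt : ∀ i j, ((x • a - y • b) i j) ^ 2
      = x ^ 2 * (a i j) ^ 2 + y ^ 2 * (b i j) ^ 2 - 2 * (x * y) * (a i j * b i j) := by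
    intro i j
    simp only [Matrix.sub_apply, Matrix.smul_apply, smul_eq_mul]
    ring
  calc ∑ i, ∑ j, ((x • a - y • b) i j) ^ 2
      = ∑ i, ∑ j, (x ^ 2 * (a i j) ^ 2 + y ^ 2 * (b i j) ^ 2
          - 2 * (x * y) * (a i j * b i j)) :=
        Finset.sum_congr rfl fun i _ => Finset.sum_congr rfl fun j _ => hpt i j
    _ = x ^ 2 * (∑ i, ∑ j, (a i j) ^ 2) + y ^ 2 * (∑ i, ∑ j, (b i j) ^ 2)
          - 2 * (x * y) * (∑ i, ∑ j, a i j * b i j) := by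
        simp only [Finset.sum_add_distrib, Finset.sum_sub_distrib, ← Finset.mul_sum]

end matrixpart

set_option maxHeartbeats 1000000 in
/-- in the shear-thinning regime `p ≤ 2`,
`|S(A) - S(B)|^(p') ≤ c·|F(A) - F(B)|²` with `c` depending only on `p`. -/
theorem stress_F_pprime_bound (p p' : ℝ) (hp1 : 1 < p) (hp2 : p ≤ 2)
    (hp' : p' = p / (p - 1)) :
    ∃ c : ℝ, 0 < c ∧
      ∀ (δ : ℝ), 0 ≤ δ → ∀ (d : ℕ) (A B : Matrix (Fin d) (Fin d) ℝ),
        frob (Smap δ p A - Smap δ p B) ^ p' ≤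
          c * frob (Fmap δ p A - Fmap δ p B) ^ 2 := by
  have hp'pos : 0 < p' := by
    rw [hp']
    exact div_pos (by linarith) (by linarith)
  have hne : p - 1 ≠ 0 := ne_of_gt (by linarith)
  have hp'2 : 0 ≤ p' - 2 := by
    have h1 : p' - 2 = (2 - p) / (p - 1) := by
      rw [hp']
      field_simp
      ring
    rw [h1]
    exact div_nonneg (by linarith) (by linarith)
  have hppos : (0:ℝ) < p := by linarith
  have hcpos : 0 < 2 ^ p' * 4 / p ^ 2 :=
    div_pos (mul_pos (Real.rpow_pos_of_pos (by norm_num) p') (by norm_num))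
      (pow_pos hppos 2)
  refine ⟨2 ^ p' * 4 / p ^ 2, hcpos, ?_⟩
  intro δ hδ d A B
  set a := msym A with ha_def
  set b := msym B with hb_def
  set s := frob a with hs_def
  set t := frob b with ht_def
  have hs : 0 ≤ s := frob_nonneg a
  have ht : 0 ≤ t := frob_nonneg b
  have hSab : Smap δ p A - Smap δ p B
      = ((δ + s) ^ (p - 2)) • a - ((δ + t) ^ (p - 2)) • b := rfl
  have hFab : Fmap δ p A - Fmap δ p B
      = ((δ + s) ^ ((p - 2)/2)) • a - ((δ + t) ^ ((p - 2)/2)) • b := rfl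
  set X := frobInner a b with hX_def
  have eS : frob (Smap δ p A - Smap δ p B) ^ 2
      = ((δ + s) ^ (p-2) * s) ^ 2 + ((δ + t) ^ (p-2) * t) ^ 2
        - 2 * ((δ + s) ^ (p-2) * (δ + t) ^ (p-2)) * X := by
    rw [hSab, frob_expand]
    ring
  have eF : frob (Fmap δ p A - Fmap δ p B) ^ 2
      = ((δ + s) ^ ((p-2)/2) * s) ^ 2 + ((δ + t) ^ ((p-2)/2) * t) ^ 2
        - 2 * ((δ + s) ^ ((p-2)/2) * (δ + t) ^ ((p-2)/2)) * X := by
    rw [hFab, frob_expand]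
    ring
  have eE : frob (a - b) ^ 2 = s ^ 2 + t ^ 2 - 2 * X := by
    have h1 : a - b = (1:ℝ) • a - (1:ℝ) • b := by simp
    rw [h1, frob_expand]
    ring
  have hxabs := frobInner_abs_le a b
  have hx1 : X ≤ s * t := by
    have := abs_le.1 hxabs
    exact this.2
  have hx2 : -(s * t) ≤ X := (abs_le.1 hxabs).1
  by_cases hsig0 : δ + s + t = 0
  · -- degenerate: everything is zero
    have hs0 : s = 0 := by linarith
    have ht0 : t = 0 := by linarith
    have ha0 : a = 0 := frob_eq_zero hs0
    have hb0 : b = 0 := frob_eq_zero ht0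
    have hS0 : Smap δ p A - Smap δ p B = 0 := by
      rw [hSab, ha0, hb0, smul_zero, smul_zero, sub_zero]
    have hfz : frob (0 : Matrix (Fin d) (Fin d) ℝ) = 0 := by
      rw [frob]
      have hz : ∀ i : Fin d, ∑ j, ((0 : Matrix (Fin d) (Fin d) ℝ) i j) ^ 2 = 0 := by
        intro i
        apply Finset.sum_eq_zero
        intro j _
        simp
      rw [Finset.sum_eq_zero (fun i _ => hz i), Real.sqrt_zero]
    rw [hS0, hfz, Real.zero_rpow (ne_of_gt hp'pos)]
    have : 0 ≤ frob (Fmap δ p A - Fmap δ p B) ^ 2 := sq_nonneg _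
    positivity
  · have hsig : 0 < δ + s + t := lt_of_le_of_ne (by linarith) (Ne.symm hsig0)
    have hA : frob (Smap δ p A - Smap δ p B) ^ 2
        ≤ 4 * ((δ + s + t) ^ (p-2)) ^ 2 * frob (a - b) ^ 2 := by
      rw [eS, eE]
      exact S_quad hp1 hp2 hδ hs ht hsig hx1 hx2
    have hB : p ^ 2 / 4 * ((δ + s + t) ^ (p-2)) * frob (a - b) ^ 2
        ≤ frob (Fmap δ p A - Fmap δ p B) ^ 2 := by
      rw [eF, eE]
      exact F_quad hp1 hp2 hδ hs ht hsig hx1 hx2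
    set E := frob (a - b) with hE_def
    have hE0 : 0 ≤ E := frob_nonneg _
    set G := (δ + s + t) ^ (p-2) with hG_def
    have hGpos : 0 < G := Real.rpow_pos_of_pos hsig _
    by_cases hE : E = 0
    · have hNS2 : frob (Smap δ p A - Smap δ p B) ^ 2 ≤ 0 := by
        rw [hE] at hA
        simpa using hA
      have hNS0 : frob (Smap δ p A - Smap δ p B) = 0 := by
        have := frob_nonneg (Smap δ p A - Smap δ p B)
        nlinarith
      rw [hNS0, Real.zero_rpow (ne_of_gt hp'pos)]
      have h2 : 0 ≤ frob (Fmap δ p A - Fmap δ p B) ^ 2 := sq_nonneg _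
      positivity
    · have hEpos : 0 < E := lt_of_le_of_ne hE0 (Ne.symm hE)
      -- NS ≤ 2*G*E
      have hNS : frob (Smap δ p A - Smap δ p B) ≤ 2 * G * E := by
        have h2 : frob (Smap δ p A - Smap δ p B) ^ 2 ≤ (2 * G * E) ^ 2 := by
          nlinarith [hA]
        have := Real.sqrt_le_sqrt h2
        rwa [Real.sqrt_sq (frob_nonneg _), Real.sqrt_sq (by positivity)] at this
      -- E ≤ δ + s + t
      have hEle : E ≤ δ + s + t := by
        have h2 : E ^ 2 ≤ (s + t) ^ 2 := by
          rw [hE_def, eE]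
          nlinarith
        have := Real.sqrt_le_sqrt h2
        rw [Real.sqrt_sq hE0, Real.sqrt_sq (by linarith)] at this
        linarith
      -- main chain
      have hstep1 : frob (Smap δ p A - Smap δ p B) ^ p' ≤ (2 * G * E) ^ p' :=
        Real.rpow_le_rpow (frob_nonneg _) hNS hp'pos.le
      have hsplit : (2 * G * E) ^ p' = 2 ^ p' * G ^ p' * E ^ p' := by
        rw [Real.mul_rpow (by positivity) hE0, Real.mul_rpow (by norm_num) hGpos.le]
      have hGsplit : G ^ p' = G * G ^ (p' - 1) := by
        calc G ^ p' = G ^ ((1:ℝ) + (p' - 1)) := by congr 1; ring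
          _ = G ^ (1:ℝ) * G ^ (p' - 1) := Real.rpow_add hGpos 1 (p' - 1)
          _ = G * G ^ (p' - 1) := by rw [Real.rpow_one]
      have hEsplit : E ^ p' = E ^ (2:ℕ) * E ^ (p' - 2) := by
        have h1 : E ^ p' = E ^ ((2:ℝ) + (p' - 2)) := by ring_nf
        rw [h1, Real.rpow_add hEpos]
        congr 1
        rw [show ((2:ℝ)) = ((2:ℕ):ℝ) by norm_num, Real.rpow_natCast]
      have hone : G ^ (p' - 1) * E ^ (p' - 2) ≤ 1 := by
        have hGm : G ^ (p' - 1) = (δ + s + t) ^ ((p - 2) * (p' - 1)) := by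
          rw [hG_def, ← Real.rpow_mul hsig.le]
        have hEm : E ^ (p' - 2) ≤ (δ + s + t) ^ (p' - 2) :=
          Real.rpow_le_rpow hE0 hEle hp'2
        have hGm0 : 0 ≤ G ^ (p' - 1) := Real.rpow_nonneg hGpos.le _
        calc G ^ (p' - 1) * E ^ (p' - 2)
            ≤ G ^ (p' - 1) * (δ + s + t) ^ (p' - 2) :=
              mul_le_mul_of_nonneg_left hEm hGm0
          _ = (δ + s + t) ^ ((p - 2) * (p' - 1) + (p' - 2)) := by
              rw [hGm, ← Real.rpow_add hsig]
          _ = 1 := by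
              have hexp : (p - 2) * (p' - 1) + (p' - 2) = 0 := by
                rw [hp']
                field_simp
                ring
              rw [hexp, Real.rpow_zero]
      have hchain : (2 * G * E) ^ p' ≤ 2 ^ p' * (G * E ^ (2:ℕ)) := by
        rw [hsplit, hGsplit, hEsplit]
        have h2p : (0:ℝ) ≤ 2 ^ p' := Real.rpow_nonneg (by norm_num) _
        have hGE2 : (0:ℝ) ≤ G * E ^ (2:ℕ) := by positivity
        calc 2 ^ p' * (G * G ^ (p' - 1)) * (E ^ (2:ℕ) * E ^ (p' - 2))
            = 2 ^ p' * (G * E ^ (2:ℕ)) * (G ^ (p' - 1) * E ^ (p' - 2)) := by ring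
          _ ≤ 2 ^ p' * (G * E ^ (2:ℕ)) * 1 := by
              exact mul_le_mul_of_nonneg_left hone (by positivity)
          _ = 2 ^ p' * (G * E ^ (2:ℕ)) := by ring
      have hfinal : 2 ^ p' * (G * E ^ (2:ℕ))
          ≤ 2 ^ p' * 4 / p ^ 2 * frob (Fmap δ p A - Fmap δ p B) ^ 2 := by
        have h2p : (0:ℝ) < 2 ^ p' := Real.rpow_pos_of_pos (by norm_num) _
        have hB' : G * E ^ (2:ℕ) ≤ 4 / p ^ 2 * frob (Fmap δ p A - Fmap δ p B) ^ 2 := by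
          have hp2pos : (0:ℝ) < p ^ 2 := by positivity
          rw [div_mul_eq_mul_div, le_div_iff₀ hp2pos]
          nlinarith [hB]
        calc 2 ^ p' * (G * E ^ (2:ℕ))
            ≤ 2 ^ p' * (4 / p ^ 2 * frob (Fmap δ p A - Fmap δ p B) ^ 2) :=
              mul_le_mul_of_nonneg_left hB' h2p.le
          _ = 2 ^ p' * 4 / p ^ 2 * frob (Fmap δ p A - Fmap δ p B) ^ 2 := by ring
      calc frob (Smap δ p A - Smap δ p B) ^ p' ≤ (2 * G * E) ^ p' := hstep1
        _ ≤ 2 ^ p' * (G * E ^ (2:ℕ)) := hchain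
        _ ≤ 2 ^ p' * 4 / p ^ 2 * frob (Fmap δ p A - Fmap δ p B) ^ 2 := hfinal
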